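/- Let A ∈ SL(2,ℝ) be hyperbolic, set t := |tr A| > 2 and N(A) := ((t + √(t² − 4))/2)². Then the infimum over z in the upper half-plane ℍ of the hyperbolic distance dist(z, A • z) equals log N(A) = 2·log((t + √(t² − 4))/2), and this infimum is attained at some point of ℍ. (This is the statement that the periodic geodesic corresponding to the conjugacy class of A has length log N(A).) -/

import Mathlib

/-!
Writing `P(z) = c z² + (d - a) z - b` for the fixed-point polynomial of `g = !![a, b; c, d]`, one
has `z - g • z = P(z) / (c z + d)`, so the distance formula in `ℍ` gives
`cosh d(z, g • z) = 1 + |P(z)|² / (2 (det g) (Im z)²)`. Moreover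
`|P(z)|² = disc(g) (Im z)² + K(z)²` with `K(z) = c |z|² + (d - a) Re z - b`, so the displacement
is smallest exactly where `K` vanishes. For hyperbolic `g` this happens on the axis of `g` (the
half-circle or vertical line joining its two real fixed points). For `g ∈ SL(2, ℝ)` with
`t = |tr g|` this minimum is `cosh d = t² / 2 - 1 = cosh (log N)`.
-/

open scoped MatrixGroups UpperHalfPlane
open Matrix

namespace UpperHalfPlane

open Complex Polynomial GeneralLinearGroup

def axisForm (g : GL (Fin 2) ℝ) (z : ℍ) : ℝ :=
  g 1 0 * normSq (z : ℂ) + (g 1 1 - g 0 0) * z.re - g 0 1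

variable {g : GL (Fin 2) ℝ}

theorem mul_denom_sub_num (z : ℂ) :
    z * denom g z - num g z = aeval z g.fixpointPolynomial := by
  simp [fixpointPolynomial, num, denom]
  ring

theorem normSq_aeval_fixpointPolynomial (z : ℍ) :
    normSq (aeval (z : ℂ) g.fixpointPolynomial) = g.val.discr * z.im ^ 2 + axisForm g z ^ 2 := by
  simp [fixpointPolynomial, axisForm, normSq_apply, discr_fin_two, trace_fin_two, det_fin_two, sq]
  ring

theorem cosh_dist_smul (hg : 0 < g.det.val) (z : ℍ) :
    Real.cosh (dist z (g • z)) =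
      1 + (g.val.discr + axisForm g z ^ 2 / z.im ^ 2) / (2 * g.det.val) := by
  have hsub : (z : ℂ) - num g z / denom g z = aeval (z : ℂ) g.fixpointPolynomial / denom g z := by
    rw [← mul_denom_sub_num, sub_div, mul_div_cancel_right₀ _ (denom_ne_zero g z)]
  rw [cosh_dist, im_smul_eq_div_normSq, coe_smul_of_det_pos hg, abs_of_pos hg, Complex.dist_eq,
    hsub, ← normSq_eq_norm_sq, normSq_div, normSq_aeval_fixpointPolynomial]
  have := normSq_denom_pos g (z := z) (by simp [z.im_ne_zero])
  field_simp

theorem exists_axisForm_eq_zero (hg : g.IsHyperbolic) : ∃ z : ℍ, axisForm g z = 0 := by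
  rw [GeneralLinearGroup.IsHyperbolic, Matrix.IsHyperbolic, discr_fin_two, trace_fin_two,
    det_fin_two] at hg
  by_cases hc : g 1 0 = 0
  · have hda : g 1 1 - g 0 0 ≠ 0 := by
      intro h
      rw [hc, ← sub_eq_zero.mp h] at hg
      nlinarith
    refine ⟨mk ⟨g 0 1 / (g 1 1 - g 0 0), 1⟩ one_pos, ?_⟩
    simp [axisForm, hc]
    field_simp
    ring
  · set D := (g 0 0 + g 1 1) ^ 2 - 4 * (g 0 0 * g 1 1 - g 0 1 * g 1 0)
    refine ⟨mk ⟨(g 0 0 - g 1 1) / (2 * g 1 0), √D / (2 * |g 1 0|)⟩ (by positivity), ?_⟩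
    have hy : (√D / (2 * |g 1 0|)) ^ 2 = D / (4 * g 1 0 ^ 2) := by
      rw [div_pow, mul_pow, sq_abs, Real.sq_sqrt hg.le]
      norm_num
    simp only [axisForm, mk_re, normSq_apply, ← sq, hy]
    field_simp
    ring

theorem isLeast_cosh_dist_smul (hdet : 0 < g.det.val) (hg : g.IsHyperbolic) :
    IsLeast (Set.range fun z : ℍ => Real.cosh (dist z (g • z)))
      (1 + g.val.discr / (2 * g.det.val)) := by
  constructor
  · obtain ⟨z, hz⟩ := exists_axisForm_eq_zero hg
    exact ⟨z, by simp [cosh_dist_smul hdet, hz]⟩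
  · rintro _ ⟨z, rfl⟩
    dsimp only
    rw [cosh_dist_smul hdet]
    gcongr
    exact le_add_of_nonneg_right (by positivity)

end UpperHalfPlane

theorem isLeast_of_isLeast_cosh {ι : Type*} {f : ι → ℝ} {ℓ : ℝ} (hf : ∀ i, 0 ≤ f i) (hℓ : 0 ≤ ℓ)
    (h : IsLeast (Set.range fun i => Real.cosh (f i)) (Real.cosh ℓ)) : IsLeast (Set.range f) ℓ := by
  obtain ⟨⟨i, hi⟩, hle⟩ := h
  refine ⟨⟨i, Real.cosh_injOn (hf i) hℓ hi⟩, ?_⟩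
  rintro _ ⟨j, rfl⟩
  exact (Real.cosh_strictMonoOn.le_iff_le hℓ (hf j)).mp (hle ⟨j, rfl⟩)

theorem Real.cosh_log_sq_add_sqrt {t : ℝ} (ht : 4 ≤ t ^ 2) :
    Real.cosh (Real.log (((t + √(t ^ 2 - 4)) / 2) ^ 2)) = 1 + (t ^ 2 - 4) / 2 := by
  have hs := Real.sq_sqrt (sub_nonneg.mpr ht)
  have hmul : ((t + √(t ^ 2 - 4)) / 2) ^ 2 * ((t - √(t ^ 2 - 4)) / 2) ^ 2 = 1 := by
    linear_combination ((√(t ^ 2 - 4) ^ 2 - t ^ 2 - 4) / 16) * hs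
  have hpos := (sq_nonneg _).lt_of_ne (left_ne_zero_of_mul_eq_one hmul).symm
  rw [Real.cosh_log hpos, inv_eq_of_mul_eq_one_right hmul]
  linear_combination hs / 4

theorem displacement_of_hyperbolic
    (A : SL(2, ℝ)) (t : ℝ)
    (ht : t = |Matrix.trace (A : Matrix (Fin 2) (Fin 2) ℝ)|)
    (ht2 : 2 < t)
    (N : ℝ) (hN : N = ((t + Real.sqrt (t ^ 2 - 4)) / 2) ^ 2) :
    IsLeast (Set.range fun z : ℍ => dist z (A • z)) (Real.log N) ∧
    Real.log N = 2 * Real.log ((t + Real.sqrt (t ^ 2 - 4)) / 2) := by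
  set g := Matrix.SpecialLinearGroup.mapGL ℝ A
  have hdet : g.det.val = 1 := by simp [g]
  have hdiscr : g.val.discr = t ^ 2 - 4 := by simp [g, ht, discr_fin_two, sq_abs]
  have hN1 : 1 ≤ N := hN ▸ one_le_pow₀ (by linarith [Real.sqrt_nonneg (t ^ 2 - 4)])
  refine ⟨isLeast_of_isLeast_cosh (fun _ => dist_nonneg) (Real.log_nonneg hN1) ?_, ?_⟩
  · have hg : g.IsHyperbolic := show 0 < g.val.discr by nlinarith
    have hcosh := UpperHalfPlane.isLeast_cosh_dist_smul (by simp [hdet]) hg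
    rw [hdet, hdiscr, mul_one] at hcosh
    rwa [hN, Real.cosh_log_sq_add_sqrt (by nlinarith)]
  · rw [hN, Real.log_pow]
    push_cast
    ring
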